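/- arXiv:1906.09484 — 5 statements merged into one kernel-verified Lean document; each statement's English description precedes it below -/
import Mathlib

section
/- For disjoint events A, B and event C all with positive probability, if RB(A|C) > 1 and RB(B|C) < 1, then RB(A∪B|C) < 1 if and only if P(A|A∪B) < (1 - RB(B|C))/(RB(A|C) - RB(B|C)). In particular, evidence in favor of A can coexist with evidence against the superset A∪B. -/
open MeasureTheory

noncomputable def condProb {Ω : Type*} [MeasurableSpace Ω] (P : Measure Ω) (A C : Set Ω) : ℝ :=
  (P (A ∩ C)).toReal / (P C).toReal

noncomputable def RB {Ω : Type*} [MeasurableSpace Ω] (P : Measure Ω) (A C : Set Ω) : ℝ :=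
  condProb P A C / (P A).toReal

/-- with RB(A|C) > 1 and RB(B|C) < 1, evidence against the union A∪B obtains
iff P(A|A∪B) < (1 - RB(B|C))/(RB(A|C) - RB(B|C)). -/
theorem rb_union_incoherence {Ω : Type*} [MeasurableSpace Ω] (P : Measure Ω)
    [IsProbabilityMeasure P] (A B C : Set Ω) (hAm : MeasurableSet A) (hBm : MeasurableSet B)
    (hAB : A ∩ B = ∅)
    (hA : 0 < (P A).toReal) (hB : 0 < (P B).toReal) (hC : 0 < (P C).toReal)
    (hRA : 1 < RB P A C) (hRB : RB P B C < 1) :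
    (RB P (A ∪ B) C < 1 ↔
      condProb P A (A ∪ B) < (1 - RB P B C) / (RB P A C - RB P B C)) := by
  have hdisj : Disjoint A B := Set.disjoint_iff_inter_eq_empty.mpr hAB
  set a := (P A).toReal with ha
  set b := (P B).toReal with hb
  set c := (P C).toReal with hc
  set x := (P (A ∩ C)).toReal with hx
  set y := (P (B ∩ C)).toReal with hy
  have hx0 : 0 ≤ x := ENNReal.toReal_nonneg
  have hy0 : 0 ≤ y := ENNReal.toReal_nonneg
  -- P(A∪B) = a + b
  have hPun : (P (A ∪ B)).toReal = a + b := by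
    rw [measure_union hdisj hBm,
      ENNReal.toReal_add (measure_ne_top P A) (measure_ne_top P B)]
  -- P((A∪B)∩C) = x + y
  have hPunC : (P ((A ∪ B) ∩ C)).toReal = x + y := by
    have h1 : (A ∪ B) ∩ C ∩ A = A ∩ C := by
      ext ω; simp only [Set.mem_inter_iff, Set.mem_union]; tauto
    have h2 : ((A ∪ B) ∩ C) \ A = B ∩ C := by
      ext ω
      simp only [Set.mem_diff, Set.mem_inter_iff, Set.mem_union]
      constructor
      · rintro ⟨⟨h | h, hωC⟩, hωA⟩
        · exact absurd h hωA
        · exact ⟨h, hωC⟩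
      · rintro ⟨hωB, hωC⟩
        exact ⟨⟨Or.inr hωB, hωC⟩, fun hωA => by
          have : ω ∈ A ∩ B := ⟨hωA, hωB⟩
          simp [hAB] at this⟩
    have h := measure_inter_add_diff (μ := P) ((A ∪ B) ∩ C) hAm
    rw [h1, h2] at h
    rw [← h, ENNReal.toReal_add (measure_ne_top P _) (measure_ne_top P _)]
  have hAint : A ∩ (A ∪ B) = A := Set.inter_eq_left.mpr Set.subset_union_left
  have hrAval : RB P A C = x / (c * a) := by
    rw [RB, condProb, div_div]
  have hrBval : RB P B C = y / (c * b) := by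
    rw [RB, condProb, div_div]
  have hca : 0 < c * a := mul_pos hC hA
  have hcb : 0 < c * b := mul_pos hC hB
  have hab : 0 < a + b := by linarith
  have hxgt : c * a < x := by
    rw [hrAval, lt_div_iff₀ hca] at hRA; linarith
  have hylt : y < c * b := by
    rw [hrBval, div_lt_one hcb] at hRB; linarith
  have goalL : RB P (A ∪ B) C = (x + y) / c / (a + b) := by
    rw [RB, condProb, hPun, hPunC]
  have goalR : condProb P A (A ∪ B) = a / (a + b) := by
    rw [condProb, hAint, hPun]
  set p := x / (c * a) with hp
  set q := y / (c * b) with hq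
  have hpx : p * (c * a) = x := div_mul_cancel₀ x hca.ne'
  have hqy : q * (c * b) = y := div_mul_cancel₀ y hcb.ne'
  have hp1 : 1 < p := by rw [hp, lt_div_iff₀ hca]; linarith
  have hq1 : q < 1 := by rw [hq, div_lt_one hcb]; linarith
  have hpq : 0 < p - q := by linarith
  have key : (x + y) / c / (a + b) < 1 ↔ x + y < c * (a + b) := by
    rw [div_div, div_lt_one (by positivity)]
  rw [goalL, goalR, hrAval, hrBval, key, div_lt_div_iff₀ hab hpq]
  clear_value a b c x y p q
  constructor
  · intro h
    have h2 : a * p + b * q < a + b := by nlinarith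
    nlinarith
  · intro h
    have h2 : a * p + b * q < a + b := by nlinarith
    nlinarith
end

section
/- Markov-type inequality for evidence strength: for a countable parameter space Ψ with prior Π and posterior Π(·|x), and relative belief ratio RB(ψ|x) = Π({ψ}|x)/Π({ψ}), the posterior probability of {ψ : RB(ψ|x) ≤ RB(ψ₀|x)} satisfies Π({ψ₀}|x) ≤ Π({ψ : RB(ψ|x) ≤ RB(ψ₀|x)} | x) ≤ RB(ψ₀|x). -/
/-- Markov-type inequality for evidence strength on a countable parameter
space: Π({ψ₀}|x) ≤ Π({ψ : RB(ψ|x) ≤ RB(ψ₀|x)} | x) ≤ RB(ψ₀|x),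
where RB(ψ|x) = post ψ / prior ψ. -/
theorem strength_markov_bounds {Ψ : Type*} [Countable Ψ]
    (prior post : Ψ → ℝ) (hprior : ∀ ψ, 0 < prior ψ) (hpost : ∀ ψ, 0 ≤ post ψ)
    (hpriorsum : HasSum prior 1) (hpostsum : HasSum post 1) (ψ₀ : Ψ) :
    post ψ₀ ≤ (∑' ψ : {ψ // post ψ / prior ψ ≤ post ψ₀ / prior ψ₀}, post ψ.val) ∧
    (∑' ψ : {ψ // post ψ / prior ψ ≤ post ψ₀ / prior ψ₀}, post ψ.val) ≤ post ψ₀ / prior ψ₀ := by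
  have hsp : Summable post := hpostsum.summable
  have hS : Summable (fun ψ : {ψ // post ψ / prior ψ ≤ post ψ₀ / prior ψ₀} => post ψ.val) :=
    hsp.subtype _
  have hSpr : Summable (fun ψ : {ψ // post ψ / prior ψ ≤ post ψ₀ / prior ψ₀} => prior ψ.val) :=
    hpriorsum.summable.subtype _
  constructor
  · exact Summable.le_tsum hS ⟨ψ₀, le_refl _⟩ (fun j _ => hpost j.val)
  · have h1 : ∀ ψ : {ψ // post ψ / prior ψ ≤ post ψ₀ / prior ψ₀},
        post ψ.val ≤ (post ψ₀ / prior ψ₀) * prior ψ.val := by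
      intro ψ
      have h := ψ.2
      rw [div_le_iff₀ (hprior ψ.val)] at h
      linarith
    calc (∑' ψ : {ψ // post ψ / prior ψ ≤ post ψ₀ / prior ψ₀}, post ψ.val)
        ≤ ∑' ψ : {ψ // post ψ / prior ψ ≤ post ψ₀ / prior ψ₀},
            (post ψ₀ / prior ψ₀) * prior ψ.val :=
          Summable.tsum_le_tsum h1 hS (hSpr.mul_left _)
      _ = (post ψ₀ / prior ψ₀) *
            ∑' ψ : {ψ // post ψ / prior ψ ≤ post ψ₀ / prior ψ₀}, prior ψ.val := tsum_mul_left
      _ ≤ (post ψ₀ / prior ψ₀) * ∑' ψ, prior ψ := by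
          apply mul_le_mul_of_nonneg_left _
            (div_nonneg (hpost ψ₀) (hprior ψ₀).le)
          exact Summable.tsum_subtype_le prior _ (fun ψ => (hprior ψ).le) hpriorsum.summable
      _ = post ψ₀ / prior ψ₀ := by rw [hpriorsum.tsum_eq, mul_one]
end

section
/- Averaging property of relative belief: for a countable parameter space Θ with prior π, posterior π(·|x), and a map Ψ : Θ → Ψ-space, RB_Ψ(ψ|x) = Σ_{θ : Ψ(θ)=ψ} RB(θ|x) · π(θ | Ψ(θ)=ψ), i.e., the relative belief ratio of ψ is the conditional-prior average of the relative belief ratios of θ over the preimage Ψ⁻¹{ψ}. -/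
/-- averaging property of relative belief. For a surjective map F : Θ → Ψ,
RB_Ψ(ψ|x) = Σ_{θ : F θ = ψ} RB(θ|x) · π(θ | F θ = ψ), i.e., the ratio of pushforward
posterior to pushforward prior at ψ equals the conditional-prior average of RB(θ|x) over
the preimage F⁻¹{ψ}. -/
theorem rb_averaging {Θ ΨSp : Type*} [Countable Θ]
    (prior post : Θ → ℝ) (hprior : ∀ θ, 0 < prior θ) (hpost : ∀ θ, 0 ≤ post θ)
    (hpriorsum : HasSum prior 1) (hpostsum : HasSum post 1)
    (F : Θ → ΨSp) (hF : Function.Surjective F) (ψ : ΨSp) :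
    (∑' θ : {θ // F θ = ψ}, post θ.val) / (∑' θ : {θ // F θ = ψ}, prior θ.val)
      = ∑' θ : {θ // F θ = ψ},
          (post θ.val / prior θ.val) *
            (prior θ.val / (∑' θ' : {θ' // F θ' = ψ}, prior θ'.val)) := by
  have h : ∀ θ : {θ // F θ = ψ},
      (post θ.val / prior θ.val) * (prior θ.val / (∑' θ' : {θ' // F θ' = ψ}, prior θ'.val))
        = post θ.val / (∑' θ' : {θ' // F θ' = ψ}, prior θ'.val) := by
    intro θ
    rw [div_mul_div_comm, mul_comm (prior θ.val), ← div_mul_div_comm,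
      div_self (hprior θ.val).ne', mul_one]
  rw [tsum_congr h, tsum_div_const]
end

section
/- Unbiasedness of evidence (Theorem 1(i)): in a joint probability model for (ψ, X) over countable spaces, the probability of obtaining evidence in favor of ψ₀ (RB(ψ₀|X) > 1) conditional on ψ = ψ₀ being true is greater than or equal to the probability of obtaining evidence in favor of ψ₀ conditional on ψ ≠ ψ₀, assuming 0 < Π({ψ₀}) < 1. -/
/-- Theorem 1(i): unbiasedness of evidence. For a joint distribution of
(ψ, X) on countable spaces, with prior Π({ψ₀}) = Σ_x joint(ψ₀,x) ∈ (0,1), posterior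
Π({ψ₀}|x) = joint(ψ₀,x)/m(x) with m(x) = Σ_ψ joint(ψ,x), and
RB(ψ₀|x) = Π({ψ₀}|x)/Π({ψ₀}), the probability of obtaining evidence in favor of ψ₀
(RB(ψ₀|X) > 1) given ψ = ψ₀ is at least the probability of obtaining such evidence
given ψ ≠ ψ₀. -/
theorem evidence_unbiased {Ψ X : Type*} [Countable Ψ] [Countable X]
    (joint : Ψ × X → ℝ) (hnn : ∀ p, 0 ≤ joint p) (hsum : HasSum joint 1) (ψ₀ : Ψ)
    (h0 : 0 < ∑' x, joint (ψ₀, x)) (h1 : (∑' x, joint (ψ₀, x)) < 1) :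
    (∑' x : {x : X //
        1 < (joint (ψ₀, x) / (∑' ψ, joint (ψ, x))) / (∑' x', joint (ψ₀, x'))},
        joint (ψ₀, x.val)) / (∑' x', joint (ψ₀, x'))
    ≥ (∑' x : {x : X //
        1 < (joint (ψ₀, x) / (∑' ψ, joint (ψ, x))) / (∑' x', joint (ψ₀, x'))},
        ∑' ψ : {ψ : Ψ // ψ ≠ ψ₀}, joint (ψ.val, x.val)) /
      (1 - ∑' x', joint (ψ₀, x')) := by
  classical
  have hS : Summable joint := hsum.summable
  set π : ℝ := ∑' x, joint (ψ₀, x) with hπdef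
  have hπ1 : 0 < 1 - π := by linarith
  -- slice summability
  have hslice : ∀ x : X, Summable fun ψ => joint (ψ, x) := fun x =>
    hS.comp_injective (i := fun ψ => (ψ, x)) (fun a b h => by simpa using h)
  have hxsum : Summable fun x => joint (ψ₀, x) :=
    hS.comp_injective (i := fun x => (ψ₀, x)) (fun a b h => by simpa using h)
  -- r x : mass of ψ ≠ ψ₀ at x
  set r : X → ℝ := fun x => ∑' ψ : {ψ : Ψ // ψ ≠ ψ₀}, joint (ψ.val, x) with hrdef
  have hrnn : ∀ x, 0 ≤ r x := fun x => tsum_nonneg (fun ψ => hnn _)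
  -- m x = joint(ψ₀,x) + r x
  have hsplit : ∀ x, (∑' ψ, joint (ψ, x)) = joint (ψ₀, x) + r x := by
    intro x
    rw [Summable.tsum_eq_add_tsum_ite (hslice x) ψ₀]
    congr 1
    rw [eq_comm]
    have hval : Function.Injective (Subtype.val : {ψ : Ψ // ψ ≠ ψ₀} → Ψ) :=
      Subtype.val_injective
    have hsupp : Function.support (fun ψ => if ψ = ψ₀ then 0 else joint (ψ, x))
        ⊆ Set.range (Subtype.val : {ψ : Ψ // ψ ≠ ψ₀} → Ψ) := by
      intro ψ hψ
      simp only [Function.mem_support] at hψ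
      have hne : ψ ≠ ψ₀ := by intro e; simp [e] at hψ
      exact ⟨⟨ψ, hne⟩, rfl⟩
    rw [← hval.tsum_eq hsupp]
    exact tsum_congr fun c => by simp [c.property]
  -- summability of r
  have hr : Summable r := by
    have hswap : Summable fun p : X × Ψ => joint (p.2, p.1) :=
      hS.comp_injective (i := fun p : X × Ψ => (p.2, p.1))
        (fun a b h => by
          obtain ⟨a1, a2⟩ := a; obtain ⟨b1, b2⟩ := b
          simpa [Prod.ext_iff, and_comm] using h)
    have hm : Summable fun x : X => ∑' ψ, joint (ψ, x) := by
      have h2 : HasSum (fun p : X × Ψ => joint (p.2, p.1)) (∑' p : X × Ψ, joint (p.2, p.1)) :=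
        hswap.hasSum
      exact (h2.prod_fiberwise (fun x => (hslice x).hasSum)).summable
    have : r = fun x => (∑' ψ, joint (ψ, x)) - joint (ψ₀, x) := by
      funext x; rw [hsplit x]; ring
    rw [this]
    exact hm.sub hxsum
  -- pointwise inequality on the evidence set
  have key : ∀ x : X,
      1 < (joint (ψ₀, x) / (∑' ψ, joint (ψ, x))) / π →
      π * r x ≤ (1 - π) * joint (ψ₀, x) := by
    intro x hx
    set m : ℝ := ∑' ψ, joint (ψ, x) with hmdef
    have hmnn : 0 ≤ m := tsum_nonneg (fun ψ => hnn _)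
    have hm0 : 0 < m := by
      rcases hmnn.lt_or_eq with h | h
      · exact h
      · exfalso
        rw [← h] at hx
        simp at hx
        linarith
    have h2 : π < joint (ψ₀, x) / m := by
      have := (lt_div_iff₀ h0).mp hx
      linarith
    have h3 : π * m < joint (ψ₀, x) := (lt_div_iff₀ hm0).mp h2
    rw [hmdef, hsplit x] at h3
    nlinarith [hrnn x, hnn (ψ₀, x)]
  -- sum the inequality over the evidence set
  have hsumineq :
      π * (∑' x : {x : X //
          1 < (joint (ψ₀, x) / (∑' ψ, joint (ψ, x))) / π},
          ∑' ψ : {ψ : Ψ // ψ ≠ ψ₀}, joint (ψ.val, x.val))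
      ≤ (1 - π) * ∑' x : {x : X //
          1 < (joint (ψ₀, x) / (∑' ψ, joint (ψ, x))) / π},
          joint (ψ₀, x.val) := by
    rw [← tsum_mul_left, ← tsum_mul_left]
    refine Summable.tsum_le_tsum (fun x => key x.val x.property) ?_ ?_
    · exact (hr.subtype _).mul_left π
    · exact (hxsum.subtype _).mul_left (1 - π)
  rw [ge_iff_le, div_le_div_iff₀ hπ1 h0]
  nlinarith [hsumineq]
end

section
/- In the location-normal model with fixed standardized distance z = √n|x̄ - μ₀|/σ₀ and fixed μ*, μ₀, n, the relative belief ratio RB(μ₀|x) tends to infinity as the prior variance τ² → ∞ (the Jeffreys–Lindley phenomenon). -/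
open Real Filter Topology

/-! The exponent of the relative belief ratio converges to `-z²/2` as `τ² → ∞`, so the
exponential factor tends to the positive constant `exp (-z²/2)`, while the prefactor
`√(1 + nτ²/σ₀²)` grows like `τ`. -/

theorem tendsto_const_div_const_mul_atTop_nhds_zero (c : ℝ) {a : ℝ} (ha : 0 < a) :
    Tendsto (fun t : ℝ => c / (a * t)) atTop (𝓝 0) :=
  tendsto_const_nhds.div_atTop (tendsto_id.const_mul_atTop ha)

theorem tendsto_sqrt_one_add_mul_div_atTop {a b : ℝ} (ha : 0 < a) (hb : 0 < b) :
    Tendsto (fun t : ℝ => √(1 + a * t / b)) atTop atTop := by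
  have hlin : Tendsto (fun t : ℝ => 1 + a / b * t) atTop atTop :=
    tendsto_atTop_add_const_left atTop 1 (tendsto_id.const_mul_atTop (div_pos ha hb))
  exact tendsto_sqrt_atTop.comp (hlin.congr fun t => by ring)

theorem tendsto_gaussian_exponent (z s c d : ℝ) {a b : ℝ} (ha : 0 < a) (hb : 0 < b) :
    Tendsto (fun t : ℝ => -(1 / 2) * (1 + s / (a * t))⁻¹ * (z + c / (b * t)) ^ 2 + d / (2 * t))
      atTop (𝓝 (-(1 / 2) * z ^ 2)) := by
  have hshrink : Tendsto (fun t : ℝ => (1 + s / (a * t))⁻¹) atTop (𝓝 1) := by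
    simpa using (tendsto_const_nhds.add (tendsto_const_div_const_mul_atTop_nhds_zero s ha)).inv₀
      (by norm_num : (1 : ℝ) + 0 ≠ 0)
  have hshift : Tendsto (fun t : ℝ => z + c / (b * t)) atTop (𝓝 z) := by
    simpa using tendsto_const_nhds.add (tendsto_const_div_const_mul_atTop_nhds_zero c hb)
  simpa using ((tendsto_const_nhds (x := -(1 / 2 : ℝ)) |>.mul hshrink).mul (hshift.pow 2)).add
    (tendsto_const_div_const_mul_atTop_nhds_zero d two_pos)

/-- Jeffreys–Lindley phenomenon: with the standardized distance
z = √n(x̄-μ₀)/σ₀ and μ*, μ₀, n, σ₀ held fixed, the relative belief ratio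
RB(μ₀|x) = (1 + nt/σ₀²)^{1/2} exp{-½(1 + σ₀²/(nt))⁻¹(z + σ₀(μ*-μ₀)/(√n t))²
+ (μ₀-μ*)²/(2t)} tends to ∞ as the prior variance t = τ² → ∞. -/
theorem jeffreys_lindley (n : ℕ) (hn : 1 ≤ n) (σ₀ z μs μ₀ : ℝ) (hσ : 0 < σ₀) :
    Tendsto (fun t : ℝ =>
        Real.sqrt (1 + (n : ℝ) * t / σ₀ ^ 2) *
          Real.exp (-(1 / 2) * (1 + σ₀ ^ 2 / ((n : ℝ) * t))⁻¹ *
              (z + σ₀ * (μs - μ₀) / (Real.sqrt (n : ℝ) * t)) ^ 2 +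
            (μ₀ - μs) ^ 2 / (2 * t)))
      atTop atTop := by
  have hn₀ : (0 : ℝ) < n := by exact_mod_cast hn
  have hexp := (continuous_exp.tendsto _).comp <|
    tendsto_gaussian_exponent z (σ₀ ^ 2) (σ₀ * (μs - μ₀)) ((μ₀ - μs) ^ 2) hn₀ (sqrt_pos.2 hn₀)
  exact (tendsto_sqrt_one_add_mul_div_atTop hn₀ (pow_pos hσ 2)).atTop_mul_pos (exp_pos _) hexp
end
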